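/- arXiv:1609.04578 — 6 statements merged into one kernel-verified Lean document; each statement's English description precedes it below -/
import Mathlib

section
/- Let A ⊆ M and B ⊆ N be subsets of modules, f : A → B a function, and f* : A^h → B^h the componentwise map. Let Υ(t₁,...,t_h) = Σⱼ Υⱼ(tⱼ) and Φ(t₁,...,t_h) = Σⱼ Φⱼ(tⱼ) be sums of single-variable functions. If f* is an (Υ,Φ)-isomorphism, then for every subset J ⊆ {1,...,h}, f* is also an (Υ_J, Φ_J)-isomorphism, where Υ_J and Φ_J are obtained by negating the terms indexed by J; consequently |Υ_J(A^h)| = |Φ_J(B^h)|. -/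
open Finset

section SignedSums

variable {ι α X : Type*} [Fintype ι] [DecidableEq ι] [AddCommGroup X]

/-- Move the `J`-terms to the other side of the equation. -/
theorem sum_ite_neg_eq_iff_sum_piecewise_eq (J : Finset ι) (Υ : ι → α → X) (a a' : ι → α) :
    (∑ j, (if j ∈ J then -Υ j (a j) else Υ j (a j))
        = ∑ j, (if j ∈ J then -Υ j (a' j) else Υ j (a' j))) ↔
      ∑ j, Υ j (J.piecewise a' a j) = ∑ j, Υ j (J.piecewise a a' j) := by
  rw [← sub_eq_zero, ← sum_sub_distrib, ← sub_eq_zero (a := ∑ j, Υ j _), ← sum_sub_distrib]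
  refine Eq.congr_left (sum_congr rfl fun j _ => ?_)
  by_cases hj : j ∈ J
  · rw [piecewise_eq_of_mem _ _ _ hj, piecewise_eq_of_mem _ _ _ hj, if_pos hj, if_pos hj]
    abel
  · rw [piecewise_eq_of_notMem _ _ _ hj, piecewise_eq_of_notMem _ _ _ hj, if_neg hj, if_neg hj]

theorem sum_ite_neg_eq_iff_of_sum_eq_iff {Y : Type*} [AddCommGroup Y] {s : Set α}
    {Υ : ι → α → X} {Ψ : ι → α → Y}
    (hiso : ∀ a a' : ι → α, (∀ j, a j ∈ s) → (∀ j, a' j ∈ s) →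
      ((∑ j, Υ j (a j) = ∑ j, Υ j (a' j)) ↔ (∑ j, Ψ j (a j) = ∑ j, Ψ j (a' j))))
    (J : Finset ι) {a a' : ι → α} (ha : ∀ j, a j ∈ s) (ha' : ∀ j, a' j ∈ s) :
    (∑ j, (if j ∈ J then -Υ j (a j) else Υ j (a j))
        = ∑ j, (if j ∈ J then -Υ j (a' j) else Υ j (a' j))) ↔
      (∑ j, (if j ∈ J then -Ψ j (a j) else Ψ j (a j))
        = ∑ j, (if j ∈ J then -Ψ j (a' j) else Ψ j (a' j))) := by
  rw [sum_ite_neg_eq_iff_sum_piecewise_eq, sum_ite_neg_eq_iff_sum_piecewise_eq]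
  exact hiso _ _ (fun j => J.piecewise_cases a' a (· ∈ s) (ha' j) (ha j))
    (fun j => J.piecewise_cases a a' (· ∈ s) (ha j) (ha' j))

end SignedSums

/-- Both images are in bijection with the image of `a ↦ (F a, G a)`. -/
theorem Set.ncard_image_eq_of_eq_iff {α β γ : Type*} {s : Set α} {F : α → β} {G : α → γ}
    (hFG : ∀ a ∈ s, ∀ a' ∈ s, F a = F a' ↔ G a = G a') :
    (F '' s).ncard = (G '' s).ncard := by
  have hfst : Set.InjOn Prod.fst ((fun a => (F a, G a)) '' s) := by
    rintro _ ⟨a, ha, rfl⟩ _ ⟨a', ha', rfl⟩ h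
    exact Prod.ext h ((hFG a ha a' ha').1 h)
  have hsnd : Set.InjOn Prod.snd ((fun a => (F a, G a)) '' s) := by
    rintro _ ⟨a, ha, rfl⟩ _ ⟨a', ha', rfl⟩ h
    exact Prod.ext ((hFG a ha a' ha').2 h) h
  calc (F '' s).ncard = (Prod.fst '' ((fun a => (F a, G a)) '' s)).ncard := by
        rw [Set.image_image]
    _ = (Prod.snd '' ((fun a => (F a, G a)) '' s)).ncard := by
        rw [hfst.ncard_image, hsnd.ncard_image]
    _ = (G '' s).ncard := by rw [Set.image_image]

theorem Set.image_comp_setOf_forall_mem {ι α β : Type*} {f : α → β} {A : Set α} {B : Set β}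
    (hf : f '' A = B) :
    (fun a : ι → α => f ∘ a) '' {a | ∀ j, a j ∈ A} = {b | ∀ j, b j ∈ B} := by
  have := Set.piMap_image_univ_pi (fun _ : ι => f) (fun _ => A)
  simp only [Set.pi, Set.mem_univ, true_implies, hf] at this
  exact this

theorem stmt_7_general
    {M N : Type*}
    {X Y : Type*} [AddCommGroup X] [AddCommGroup Y]
    (A : Set M) (B : Set N) (h : ℕ)
    (Υ : Fin h → M → X) (Φ : Fin h → N → Y)
    (f : M → N) (hbij : Set.BijOn f A B)
    (hiso : ∀ a a' : Fin h → M, (∀ j, a j ∈ A) → (∀ j, a' j ∈ A) →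
      ((∑ j, Υ j (a j) = ∑ j, Υ j (a' j)) ↔
        (∑ j, Φ j (f (a j)) = ∑ j, Φ j (f (a' j))))) :
    ∀ J : Finset (Fin h),
      (∀ a a' : Fin h → M, (∀ j, a j ∈ A) → (∀ j, a' j ∈ A) →
        ((∑ j, (if j ∈ J then -Υ j (a j) else Υ j (a j))
            = ∑ j, (if j ∈ J then -Υ j (a' j) else Υ j (a' j))) ↔
          (∑ j, (if j ∈ J then -Φ j (f (a j)) else Φ j (f (a j)))
            = ∑ j, (if j ∈ J then -Φ j (f (a' j)) else Φ j (f (a' j)))))) ∧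
      ((fun a : Fin h → M => ∑ j, (if j ∈ J then -Υ j (a j) else Υ j (a j))) ''
          {a | ∀ j, a j ∈ A}).ncard =
        ((fun b : Fin h → N => ∑ j, (if j ∈ J then -Φ j (b j) else Φ j (b j))) ''
          {b | ∀ j, b j ∈ B}).ncard := by
  intro J
  have hisoJ := fun (a a' : Fin h → M) (ha : ∀ j, a j ∈ A) (ha' : ∀ j, a' j ∈ A) =>
    sum_ite_neg_eq_iff_of_sum_eq_iff (Ψ := fun j => Φ j ∘ f) hiso J ha ha'
  refine ⟨hisoJ, ?_⟩
  rw [← Set.image_comp_setOf_forall_mem hbij.image_eq, Set.image_image]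
  exact Set.ncard_image_eq_of_eq_iff fun a ha a' ha' => hisoJ a a' ha ha'

open Finset in
/-- Theorem 2: if the componentwise map `f*` is an `(Υ,Φ)`-isomorphism for the
forms `Υ = Σⱼ Υⱼ` and `Φ = Σⱼ Φⱼ`, then for every `J ⊆ {1,…,h}` it is also an
`(Υ_J,Φ_J)`-isomorphism, and `|Υ_J(Aʰ)| = |Φ_J(Bʰ)|`. -/
theorem stmt_7 {R S : Type*} [Ring R] [Ring S]
    {M N : Type*} [AddCommGroup M] [Module R M] [AddCommGroup N] [Module S N]
    {X Y : Type*} [AddCommGroup X] [AddCommGroup Y]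
    (A : Set M) (B : Set N) (h : ℕ)
    (Υ : Fin h → M → X) (Φ : Fin h → N → Y)
    (f : M → N) (hbij : Set.BijOn f A B)
    (hiso : ∀ a a' : Fin h → M, (∀ j, a j ∈ A) → (∀ j, a' j ∈ A) →
      ((∑ j, Υ j (a j) = ∑ j, Υ j (a' j)) ↔
        (∑ j, Φ j (f (a j)) = ∑ j, Φ j (f (a' j))))) :
    ∀ J : Finset (Fin h),
      (∀ a a' : Fin h → M, (∀ j, a j ∈ A) → (∀ j, a' j ∈ A) →
        ((∑ j, (if j ∈ J then -Υ j (a j) else Υ j (a j))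
            = ∑ j, (if j ∈ J then -Υ j (a' j) else Υ j (a' j))) ↔
          (∑ j, (if j ∈ J then -Φ j (f (a j)) else Φ j (f (a j)))
            = ∑ j, (if j ∈ J then -Φ j (f (a' j)) else Φ j (f (a' j)))))) ∧
      ((fun a : Fin h → M => ∑ j, (if j ∈ J then -Υ j (a j) else Υ j (a j))) ''
          {a | ∀ j, a j ∈ A}).ncard =
        ((fun b : Fin h → N => ∑ j, (if j ∈ J then -Φ j (b j) else Φ j (b j))) ''
          {b | ∀ j, b j ∈ B}).ncard :=
  stmt_7_general A B h Υ Φ f hbij hiso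
end

section
/- Let Φ(t₁,...,t_h) = Σⱼ φⱼtⱼ be a nonzero linear form with integer coefficients, A a nonempty finite subset of ℤ^d, a* = max over a ∈ A and coordinates i of |πᵢ(a)|, φ* = maxⱼ |φⱼ|. If λ > 2a*φ*h + 1, then the map f_λ(x₁,...,x_d) = Σᵢ xᵢλ^{i-1} restricted to A is a Φ-isomorphism from A to a set of real numbers: for all h-tuples (a₁,...,a_h), (a_{h+1},...,a_{2h}) in A^h, Φ(a₁,...,a_h) = Φ(a_{h+1},...,a_{2h}) if and only if Φ(f_λ(a₁),...,f_λ(a_h)) = Φ(f_λ(a_{h+1}),...,f_λ(a_{2h})). -/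
/-!
Both sides of a `Φ`-relation are compared through the difference `c = Φ(a) - Φ(b) ∈ ℤ^d`, whose
coordinates are bounded by `2 a* φ* h < λ - 1`. Since `f_λ` is additive, the real relation says
`f_λ(c) = 0`, i.e. `c` is a base-`λ` expansion of zero with digits of absolute value at most `λ - 1`,
and such an expansion must vanish: the top nonzero digit would outweigh all lower ones.
-/

open Finset

section Digits

variable {K : Type*} [Field K] [LinearOrder K] [IsStrictOrderedRing K]

/-- The map `f_λ` of the paper, with coordinates indexed from `0`. -/
def evalBase (d : ℕ) (lam : K) : (Fin d → ℤ) →+ K where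
  toFun c := ∑ i, (c i : K) * lam ^ (i : ℕ)
  map_zero' := by simp
  map_add' c c' := by simp [add_mul, sum_add_distrib]

theorem abs_sum_mul_pow_le_pow_sub_one {lam : K} :
    ∀ {n : ℕ} (c : Fin n → K), (∀ i, |c i| ≤ lam - 1) →
      |∑ i, c i * lam ^ (i : ℕ)| ≤ lam ^ n - 1
  | 0, _, _ => by simp
  | n + 1, c, hc => by
    have hlam : 0 ≤ lam := by linarith [abs_nonneg (c (Fin.last n)), hc (Fin.last n)]
    have ih := abs_sum_mul_pow_le_pow_sub_one (fun i : Fin n => c i.castSucc) fun i => hc _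
    have hlast : |c (Fin.last n) * lam ^ n| ≤ (lam - 1) * lam ^ n := by
      rw [abs_mul, abs_of_nonneg (pow_nonneg hlam n)]
      exact mul_le_mul_of_nonneg_right (hc _) (pow_nonneg hlam n)
    rw [Fin.sum_univ_castSucc]
    calc |∑ i : Fin n, c i.castSucc * lam ^ (i : ℕ) + c (Fin.last n) * lam ^ n|
        ≤ (lam ^ n - 1) + (lam - 1) * lam ^ n :=
          (abs_add_le _ _).trans (add_le_add (by simpa using ih) hlast)
      _ = lam ^ (n + 1) - 1 := by ring

/-- A nonzero top digit contributes at least `λ ^ n`, more than all lower digits together. -/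
theorem evalBase_eq_zero_iff {lam : K} :
    ∀ {n : ℕ} (c : Fin n → ℤ), (∀ i, |(c i : K)| ≤ lam - 1) → (evalBase n lam c = 0 ↔ c = 0)
  | 0, c, _ => by simp only [Subsingleton.elim c 0, map_zero]
  | n + 1, c, hc => by
    refine ⟨fun hsum => ?_, fun hc0 => by rw [hc0, map_zero]⟩
    have hlam : 0 ≤ lam := by linarith [abs_nonneg (c (Fin.last n) : K), hc (Fin.last n)]
    have hsplit : evalBase n lam (fun i => c i.castSucc) + (c (Fin.last n) : K) * lam ^ n = 0 := by
      simpa [evalBase, Fin.sum_univ_castSucc] using hsum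
    have hlow := abs_sum_mul_pow_le_pow_sub_one (fun i : Fin n => (c i.castSucc : K)) fun i => hc _
    have hlast : c (Fin.last n) = 0 := by
      by_contra hne
      have hone : (1 : K) ≤ |(c (Fin.last n) : K)| := by exact_mod_cast Int.one_le_abs hne
      have htop : lam ^ n ≤ |(c (Fin.last n) : K) * lam ^ n| := by
        rw [abs_mul, abs_of_nonneg (pow_nonneg hlam n)]
        exact le_mul_of_one_le_left (pow_nonneg hlam n) hone
      rw [eq_neg_of_add_eq_zero_right hsplit, abs_neg] at htop
      simp only [evalBase, AddMonoidHom.coe_mk, ZeroHom.coe_mk] at htop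
      linarith
    rw [hlast, Int.cast_zero, zero_mul, add_zero,
      (evalBase_eq_zero_iff _ fun i => hc _)] at hsplit
    ext i
    refine Fin.lastCases hlast (fun j => ?_) i
    exact congrFun hsplit j

end Digits

theorem abs_sum_smul_sub_sum_smul_le {R ι κ : Type*} [CommRing R] [LinearOrder R]
    [IsStrictOrderedRing R] [Fintype ι] (φ : ι → R) (a b : ι → κ → R) (F M : R)
    (hφ : ∀ j, |φ j| ≤ F) (ha : ∀ j k, |a j k| ≤ M) (hb : ∀ j k, |b j k| ≤ M) (k : κ) :
    |(∑ j, φ j • a j - ∑ j, φ j • b j) k| ≤ Fintype.card ι * (2 * M * F) := by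
  simp only [Pi.sub_apply, Finset.sum_apply, Pi.smul_apply, smul_eq_mul, ← sum_sub_distrib,
    ← mul_sub]
  calc |∑ j, φ j * (a j k - b j k)| ≤ ∑ j, |φ j * (a j k - b j k)| := abs_sum_le_sum_abs _ _
    _ ≤ ∑ _j : ι, 2 * M * F := by
      refine sum_le_sum fun j _ => ?_
      rw [abs_mul, mul_comm]
      have hsub : |a j k - b j k| ≤ 2 * M := by linarith [abs_sub (a j k) (b j k), ha j k, hb j k]
      exact mul_le_mul hsub (hφ j) (abs_nonneg _) (by linarith [abs_nonneg (a j k), ha j k])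
    _ = Fintype.card ι * (2 * M * F) := by simp

open Finset in
theorem stmt_8_general (h d : ℕ) (φ : Fin h → ℤ)
    (A : Finset (Fin d → ℤ))
    (astar φstar : ℤ)
    (hastar : ∀ x ∈ A, ∀ i, |x i| ≤ astar)
    (hφstar : ∀ j, |φ j| ≤ φstar)
    (lam : ℝ) (hlam : lam > 2 * (astar : ℝ) * (φstar : ℝ) * h + 1) :
    ∀ a b : Fin h → (Fin d → ℤ), (∀ j, a j ∈ A) → (∀ j, b j ∈ A) →
      ((∑ j, φ j • a j = ∑ j, φ j • b j) ↔
        (∑ j, (φ j : ℝ) * (∑ i, (a j i : ℝ) * lam ^ (i : ℕ))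
          = ∑ j, (φ j : ℝ) * (∑ i, (b j i : ℝ) * lam ^ (i : ℕ)))) := by
  intro a b ha hb
  have hΦ : ∀ v : Fin h → Fin d → ℤ,
      ∑ j, (φ j : ℝ) * ∑ i, (v j i : ℝ) * lam ^ (i : ℕ) = evalBase d lam (∑ j, φ j • v j) := by
    intro v
    rw [map_sum]
    refine sum_congr rfl fun j _ => ?_
    rw [map_zsmul, zsmul_eq_mul]
    rfl
  have hdigits : ∀ i, |((∑ j, φ j • a j - ∑ j, φ j • b j) i : ℝ)| ≤ lam - 1 := by
    intro i
    have hbound := abs_sum_smul_sub_sum_smul_le φ a b φstar astar hφstar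
      (fun j => hastar _ (ha j)) (fun j => hastar _ (hb j)) i
    rw [Fintype.card_fin] at hbound
    have hbound_real : |((∑ j, φ j • a j - ∑ j, φ j • b j) i : ℝ)| ≤ h * (2 * astar * φstar) := by
      exact_mod_cast hbound
    linarith
  rw [hΦ, hΦ, ← sub_eq_zero, ← sub_eq_zero (a := evalBase d lam _), ← map_sub,
    evalBase_eq_zero_iff _ hdigits]

open Finset in
/-- Theorem 3 (key computation): for `λ > 2a*φ*h + 1`, the map
`f_λ(x) = Σᵢ xᵢ λ^(i-1)` is a `Φ`-isomorphism on a finite set `A ⊆ ℤ^d`. -/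
theorem stmt_8 (h d : ℕ) (φ : Fin h → ℤ) (hφ : φ ≠ 0)
    (A : Finset (Fin d → ℤ)) (hA : A.Nonempty)
    (astar φstar : ℤ)
    (hastar : ∀ x ∈ A, ∀ i, |x i| ≤ astar)
    (hφstar : ∀ j, |φ j| ≤ φstar)
    (lam : ℝ) (hlam : lam > 2 * (astar : ℝ) * (φstar : ℝ) * h + 1) :
    ∀ a b : Fin h → (Fin d → ℤ), (∀ j, a j ∈ A) → (∀ j, b j ∈ A) →
      ((∑ j, φ j • a j = ∑ j, φ j • b j) ↔
        (∑ j, (φ j : ℝ) * (∑ i, (a j i : ℝ) * lam ^ (i : ℕ))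
          = ∑ j, (φ j : ℝ) * (∑ i, (b j i : ℝ) * lam ^ (i : ℕ)))) :=
  stmt_8_general h d φ A astar φstar hastar hφstar lam hlam
end

section
/- Let Φ be a nonzero linear form with rational coefficients. Every nonempty finite subset of ℤ^d is Φ-isomorphic to a finite set of positive integers. -/
/-!
Pick an integer vector `c` such that `v ↦ c ⬝ᵥ v` is injective on the finite set consisting of
`A` and of all `Φ`-sums of elements of `A`; a moment-curve vector `(1, n, n², …)` works for all
but finitely many `n`, since `c ⬝ᵥ v` is then a nonzero polynomial in `n` for each nonzero
difference `v`. By linearity, `∑ φⱼ (c ⬝ᵥ aⱼ + t) = c ⬝ᵥ (∑ φⱼ aⱼ) + (∑ φⱼ) t`, so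
`x ↦ c ⬝ᵥ x + t` is a `Φ`-isomorphism onto its image, and a large shift `t` makes the image
positive.
-/

open Finset Polynomial

lemma Polynomial.eval_ofFn {R : Type*} [CommSemiring R] [DecidableEq R] {d : ℕ}
    (v : Fin d → R) (x : R) :
    (ofFn d v).eval x = (fun i : Fin d => x ^ (i : ℕ)) ⬝ᵥ v := by
  simp [ofFn_eq_sum_monomial, eval_finsetSum, dotProduct, mul_comm]

section MomentCurve

variable {R : Type*} [CommRing R] [IsDomain R] [CharZero R]

lemma exists_nat_pow_dotProduct_ne_zero {d : ℕ} (V : Finset (Fin d → R)) (hV : 0 ∉ V) :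
    ∃ n : ℕ, ∀ v ∈ V, (fun i : Fin d => (n : R) ^ (i : ℕ)) ⬝ᵥ v ≠ 0 := by
  classical
  set P : R[X] := ∏ v ∈ V, ofFn d v
  have hP : P ≠ 0 := prod_ne_zero_iff.mpr fun v hv =>
    (map_ne_zero_iff _ (injective_ofFn d)).mpr (ne_of_mem_of_not_mem hv hV)
  obtain ⟨n, hn⟩ : ∃ n : ℕ, ¬ P.IsRoot n := by
    by_contra! hroots
    exact hP <| eq_zero_of_infinite_isRoot P <|
      (Set.infinite_range_of_injective Nat.cast_injective).mono <| by
        rintro _ ⟨n, rfl⟩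
        exact hroots n
  refine ⟨n, fun v hv hzero => hn ?_⟩
  rw [IsRoot, eval_prod]
  exact prod_eq_zero hv (by rw [eval_ofFn, hzero])

lemma exists_int_dotProduct_injOn {d : ℕ} (s : Finset (Fin d → R)) :
    ∃ c : Fin d → ℤ, Set.InjOn (fun v => (Int.cast ∘ c : Fin d → R) ⬝ᵥ v) s := by
  classical
  obtain ⟨n, hn⟩ := exists_nat_pow_dotProduct_ne_zero
    (((s ×ˢ s).image fun p => p.1 - p.2).erase 0) (notMem_erase 0 _)
  refine ⟨fun i => (n : ℤ) ^ (i : ℕ), fun v hv w hw hvw => ?_⟩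
  by_contra hne
  refine hn (v - w) (mem_erase.mpr ⟨sub_ne_zero.mpr hne,
    mem_image.mpr ⟨(v, w), mem_product.mpr ⟨hv, hw⟩, rfl⟩⟩) ?_
  simpa [Function.comp_def, dotProduct_sub, sub_eq_zero] using hvw

end MomentCurve

lemma sum_mul_dotProduct_add {ι K : Type*} [Fintype ι] [CommSemiring K] {d : ℕ}
    (φ : ι → K) (c : Fin d → K) (v : ι → Fin d → K) (t : K) :
    ∑ j, φ j * (c ⬝ᵥ v j + t) = c ⬝ᵥ ∑ j, φ j • v j + (∑ j, φ j) * t := by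
  simp only [mul_add, sum_add_distrib, dotProduct_sum, dotProduct_smul, smul_eq_mul, sum_mul]

lemma sum_smul_eq_iff_sum_mul_dotProduct_add_eq {ι K : Type*} [Fintype ι] [CommRing K]
    {d : ℕ} (φ : ι → K) (c : Fin d → K) (t : K) {a b : ι → Fin d → K}
    (hc : c ⬝ᵥ ∑ j, φ j • a j = c ⬝ᵥ ∑ j, φ j • b j → ∑ j, φ j • a j = ∑ j, φ j • b j) :
    ∑ j, φ j • a j = ∑ j, φ j • b j ↔
      ∑ j, φ j * (c ⬝ᵥ a j + t) = ∑ j, φ j * (c ⬝ᵥ b j + t) := by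
  rw [sum_mul_dotProduct_add, sum_mul_dotProduct_add, add_left_inj]
  exact ⟨congrArg _, hc⟩

lemma Finset.exists_forall_add_pos {α : Type*} (s : Finset α) (g : α → ℤ) :
    ∃ N : ℤ, ∀ x ∈ s, 0 < g x + N := by
  obtain ⟨M, hM⟩ := (s.image fun x => -g x).exists_le
  exact ⟨M + 1, fun x hx => by linarith [hM _ (mem_image_of_mem _ hx)]⟩

open Finset in
theorem stmt_9_general (h d : ℕ) (φ : Fin h → ℚ)
    (A : Finset (Fin d → ℤ)) :
    ∃ (B : Finset ℤ) (f : (Fin d → ℤ) → ℤ),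
      (∀ b ∈ B, 0 < b) ∧ Set.BijOn f A B ∧
      ∀ a b : Fin h → (Fin d → ℤ), (∀ j, a j ∈ A) → (∀ j, b j ∈ A) →
        ((∑ j, φ j • (fun i => ((a j i : ℚ)))
            = ∑ j, φ j • (fun i => ((b j i : ℚ)))) ↔
          (∑ j, φ j * (f (a j) : ℚ) = ∑ j, φ j * (f (b j) : ℚ))) := by
  classical
  let castVec : (Fin d → ℤ) → Fin d → ℚ := fun x i => x i
  let phiSums := (Fintype.piFinset fun _ : Fin h => A).image fun a => ∑ j, φ j • castVec (a j)
  obtain ⟨c, hc⟩ := exists_int_dotProduct_injOn (A.image castVec ∪ phiSums)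
  obtain ⟨N, hN⟩ := Finset.exists_forall_add_pos A (c ⬝ᵥ ·)
  set f : (Fin d → ℤ) → ℤ := fun x => c ⬝ᵥ x + N
  have hf_cast (x : Fin d → ℤ) : (f x : ℚ) = (Int.cast ∘ c) ⬝ᵥ castVec x + N := by
    simp [f, castVec, dotProduct]
  have hf_inj : Set.InjOn f A := fun x hx y hy hxy => by
    have hcast : castVec x = castVec y :=
      hc (mem_union_left _ (mem_image_of_mem castVec hx))
        (mem_union_left _ (mem_image_of_mem castVec hy))
        (by simpa [hf_cast] using congrArg (Int.cast (R := ℚ)) hxy)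
    exact funext fun i => Int.cast_injective (congrFun hcast i)
  refine ⟨A.image f, f, ?_, by simpa using hf_inj.bijOn_image, fun a b ha hb => ?_⟩
  · simpa using hN
  · have mem_phiSums (a : Fin h → Fin d → ℤ) (ha : ∀ j, a j ∈ A) :
        ∑ j, φ j • castVec (a j) ∈ A.image castVec ∪ phiSums :=
      mem_union_right _ (mem_image.mpr ⟨a, Fintype.mem_piFinset.mpr ha, rfl⟩)
    simp only [hf_cast]
    exact sum_smul_eq_iff_sum_mul_dotProduct_add_eq _ _ _
      (hc (mem_phiSums a ha) (mem_phiSums b hb))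

open Finset in
/-- Theorem 3: every nonempty finite subset of `ℤ^d` is `Φ`-isomorphic to a
set of positive integers, for any nonzero linear form `Φ` with rational
coefficients. -/
theorem stmt_9 (h d : ℕ) (φ : Fin h → ℚ) (hφ : φ ≠ 0)
    (A : Finset (Fin d → ℤ)) (hA : A.Nonempty) :
    ∃ (B : Finset ℤ) (f : (Fin d → ℤ) → ℤ),
      (∀ b ∈ B, 0 < b) ∧ Set.BijOn f A B ∧
      ∀ a b : Fin h → (Fin d → ℤ), (∀ j, a j ∈ A) → (∀ j, b j ∈ A) →
        ((∑ j, φ j • (fun i => ((a j i : ℚ)))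
            = ∑ j, φ j • (fun i => ((b j i : ℚ)))) ↔
          (∑ j, φ j * (f (a j) : ℚ) = ∑ j, φ j * (f (b j) : ℚ))) :=
  stmt_9_general h d φ A
end

section
/- Let Φ(t₁,...,t_h) = Σⱼ φⱼtⱼ be a nonzero linear form with rational coefficients. Every nonempty finite set A of real numbers is Φ-isomorphic to a finite set of positive integers. -/
/-!
Viewing `ℝ` as a `ℚ`-vector space, there is a `ℚ`-linear functional `T : ℝ → ℚ` injective on any
prescribed finite set, because a vector space over an infinite field is not a finite union of
proper hyperplanes. Taking that set to be `A` together with all values of `Φ` on `A`,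
`T` preserves and reflects every relation `Φ(a) = Φ(b)` and is injective on `A`. Clearing
denominators and shifting, `x ↦ c * T x + d` sends `A` into the positive integers; since `Φ`
evaluated on both sides of a relation has the same number of terms, the affine change of variables
does not affect whether it holds.
-/

open Finset

theorem Module.exists_dual_injOn {K V : Type*} [Field K] [Infinite K] [AddCommGroup V]
    [Module K V] {s : Set V} (hs : s.Finite) : ∃ T : Module.Dual K V, Set.InjOn T s := by
  have : Finite {p : s × s // (p.1 : V) ≠ p.2} := by
    have := hs.to_subtype
    infer_instance
  obtain ⟨T, hT⟩ := Module.exists_dual_forall_apply_ne_zero (K := K)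
    (fun p : {p : s × s // (p.1 : V) ≠ p.2} => (p.1.1 : V) - p.1.2)
    fun p => sub_ne_zero.mpr p.2
  refine ⟨T, fun x hx y hy hxy => ?_⟩
  by_contra hne
  exact hT ⟨(⟨x, hx⟩, ⟨y, hy⟩), hne⟩ (by simp [map_sub, hxy])

theorem Rat.exists_affine_pos_int (s : Finset ℚ) :
    ∃ (F : ℚ → ℤ) (c d : ℚ), c ≠ 0 ∧ ∀ q ∈ s, 0 < F q ∧ (F q : ℚ) = c * q + d := by
  obtain ⟨b, hb⟩ := IsLocalization.exist_integer_multiples_of_finset (nonZeroDivisors ℤ) s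
  set c : ℚ := ((b : ℤ) : ℚ)
  have hint : ∀ q ∈ s, ((⌊c * q⌋ : ℤ) : ℚ) = c * q := by
    intro q hq
    obtain ⟨z, hz⟩ := hb q hq
    rw [eq_intCast, zsmul_eq_mul] at hz
    rw [← hz, Int.floor_intCast]
  obtain ⟨m, hm⟩ := (s.image fun q => ⌊c * q⌋).bddBelow
  refine ⟨fun q => ⌊c * q⌋ - m + 1, c, 1 - m,
    Int.cast_ne_zero.mpr (nonZeroDivisors.coe_ne_zero b), fun q hq => ⟨?_, ?_⟩⟩
  · have := hm (mem_image_of_mem _ hq)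
    dsimp only
    omega
  · push_cast [hint q hq]
    ring

theorem sum_mul_affine_eq_sum_mul_affine_iff {ι K : Type*} [Field K] (s : Finset ι) (φ : ι → K)
    {c : K} (hc : c ≠ 0) (d : K) (u v : ι → K) :
    ∑ j ∈ s, φ j * (c * u j + d) = ∑ j ∈ s, φ j * (c * v j + d) ↔
      ∑ j ∈ s, φ j * u j = ∑ j ∈ s, φ j * v j := by
  have expand : ∀ w : ι → K,
      ∑ j ∈ s, φ j * (c * w j + d) = c * ∑ j ∈ s, φ j * w j + d * ∑ j ∈ s, φ j := by
    intro w
    simp only [mul_add, sum_add_distrib, mul_sum]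
    congr 1 <;> exact sum_congr rfl fun j _ => by ring
  rw [expand, expand, add_left_inj, mul_right_inj' hc]

theorem LinearMap.map_sum_ratCast_mul {ι K M : Type*} [DivisionRing K] [CharZero K]
    [AddCommGroup M] [Module ℚ M] (T : K →ₗ[ℚ] M) (s : Finset ι) (φ : ι → ℚ) (a : ι → K) :
    T (∑ j ∈ s, (φ j : K) * a j) = ∑ j ∈ s, φ j • T (a j) := by
  simp only [← Rat.smul_def, map_sum, map_smul]

open Finset in
theorem stmt_10_general (h : ℕ) (φ : Fin h → ℚ)
    (A : Finset ℝ) :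
    ∃ (B : Finset ℤ) (f : ℝ → ℤ),
      (∀ b ∈ B, 0 < b) ∧ Set.BijOn f A B ∧
      ∀ a b : Fin h → ℝ, (∀ j, a j ∈ A) → (∀ j, b j ∈ A) →
        ((∑ j, (φ j : ℝ) * a j = ∑ j, (φ j : ℝ) * b j) ↔
          (∑ j, φ j * (f (a j) : ℚ) = ∑ j, φ j * (f (b j) : ℚ))) := by
  classical
  let Φ : (Fin h → ℝ) → ℝ := fun a => ∑ j, (φ j : ℝ) * a j
  let S : Finset ℝ := A ∪ (Fintype.piFinset fun _ => A).image Φ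
  obtain ⟨T, hT⟩ := Module.exists_dual_injOn (K := ℚ) S.finite_toSet
  obtain ⟨F, c, d, hc, hF⟩ := Rat.exists_affine_pos_int (A.image T)
  have hFT : ∀ x ∈ A, (F (T x) : ℚ) = c * T x + d := fun x hx =>
    (hF _ (mem_image_of_mem T hx)).2
  have hΦS : ∀ a : Fin h → ℝ, (∀ j, a j ∈ A) → Φ a ∈ S := fun a ha =>
    mem_union_right _ (mem_image_of_mem Φ (Fintype.mem_piFinset.mpr ha))
  have hinj : Set.InjOn (F ∘ T) A := by
    intro x hx y hy hxy
    have hTxy : T x = T y := by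
      simpa [hFT x hx, hFT y hy, hc] using congrArg (fun z : ℤ => (z : ℚ)) hxy
    exact hT (mem_union_left _ hx) (mem_union_left _ hy) hTxy
  refine ⟨A.image (F ∘ T), F ∘ T, ?_, by simpa only [coe_image] using hinj.bijOn_image, ?_⟩
  · simp only [mem_image, Function.comp_apply, forall_exists_index, and_imp]
    rintro _ x hx rfl
    exact (hF _ (mem_image_of_mem T hx)).1
  · intro a b ha hb
    calc Φ a = Φ b ↔ T (Φ a) = T (Φ b) := (hT.eq_iff (hΦS a ha) (hΦS b hb)).symm
      _ ↔ ∑ j, φ j * T (a j) = ∑ j, φ j * T (b j) := by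
        simp only [Φ, T.map_sum_ratCast_mul, smul_eq_mul]
      _ ↔ ∑ j, φ j * (c * T (a j) + d) = ∑ j, φ j * (c * T (b j) + d) :=
        (sum_mul_affine_eq_sum_mul_affine_iff _ φ hc d _ _).symm
      _ ↔ _ := by
        simp only [Function.comp_apply, hFT _ (ha _), hFT _ (hb _)]

open Finset in
/-- Theorem 4: every nonempty finite set of real numbers is `Φ`-isomorphic to a
set of positive integers, for any nonzero linear form `Φ` with rational
coefficients. -/
theorem stmt_10 (h : ℕ) (φ : Fin h → ℚ) (hφ : φ ≠ 0)
    (A : Finset ℝ) (hA : A.Nonempty) :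
    ∃ (B : Finset ℤ) (f : ℝ → ℤ),
      (∀ b ∈ B, 0 < b) ∧ Set.BijOn f A B ∧
      ∀ a b : Fin h → ℝ, (∀ j, a j ∈ A) → (∀ j, b j ∈ A) →
        ((∑ j, (φ j : ℝ) * a j = ∑ j, (φ j : ℝ) * b j) ↔
          (∑ j, φ j * (f (a j) : ℚ) = ∑ j, φ j * (f (b j) : ℚ))) :=
  stmt_10_general h φ A
end

section
/- Let A be a finite set of real numbers with |A| ≥ 2, Φ a nonzero linear form with integer coefficients, δ* the minimum gap between distinct elements of Φ(A^h), and ε < min(δ*,1)/(2hφ*) where φ* = maxⱼ|φⱼ|. If q is a positive integer and b₁,...,b_k are integers with |qaᵢ - bᵢ| < ε for all i, then the map aᵢ ↦ bᵢ is a Φ-isomorphism from A to B = {b₁,...,b_k}. -/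
/-!
Multiplying by `q` turns every value `Φ(a_σ)` into a real number within `hφ*ε` of the
integer `Φ(b_σ)`. Equal real values therefore give integers at distance less than
`2hφ*ε < 1`, which must coincide; conversely, equal integers put `Φ(a_σ)` and `Φ(a_τ)`
within `2hφ*ε/q < δ*` of each other, so they coincide by the definition of `δ*`.
Injectivity of `b` is the special case where `σ` and `τ` differ only in a coordinate `j₀`
with `φ j₀ ≠ 0`.
-/

open Finset Function

theorem abs_sum_mul_sub_sum_mul_le {ι : Type*} [Fintype ι] {c x y : ι → ℝ} {M ε : ℝ}
    (hc : ∀ j, |c j| ≤ M) (hxy : ∀ j, |x j - y j| ≤ ε) :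
    |∑ j, c j * x j - ∑ j, c j * y j| ≤ Fintype.card ι * (M * ε) := by
  rw [← sum_sub_distrib]
  calc |∑ j, (c j * x j - c j * y j)|
      ≤ ∑ j, |c j * x j - c j * y j| := abs_sum_le_sum_abs _ _
    _ ≤ Fintype.card ι • (M * ε) := by
      refine sum_le_card_nsmul _ _ _ fun j _ => ?_
      rw [← mul_sub, abs_mul]
      exact mul_le_mul (hc j) (hxy j) (abs_nonneg _) ((abs_nonneg _).trans (hc j))
    _ = Fintype.card ι * (M * ε) := nsmul_eq_mul _ _

theorem eq_iff_intCast_eq_of_abs_mul_sub_le {u v q η δ : ℝ} {m n : ℤ} (hq : 1 ≤ q)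
    (hu : |q * u - m| ≤ η) (hv : |q * v - n| ≤ η) (hη : 2 * η < min δ 1)
    (hgap : u ≠ v → δ ≤ |u - v|) : u = v ↔ m = n := by
  constructor
  · rintro rfl
    have hmn : |((m - n : ℤ) : ℝ)| < 1 := by
      push_cast
      calc |(m : ℝ) - n| ≤ |(m : ℝ) - q * u| + |q * u - n| := abs_sub_le _ _ _
        _ ≤ 2 * η := by rw [abs_sub_comm]; linarith
        _ < 1 := hη.trans_le (min_le_right _ _)
    have := abs_lt.mp (by exact_mod_cast hmn : |m - n| < 1)
    omega
  · rintro rfl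
    by_contra hne
    have hqpos : 0 < q := one_pos.trans_le hq
    have : |u - v| < δ :=
      calc |u - v| ≤ q * |u - v| := le_mul_of_one_le_left (abs_nonneg _) hq
        _ = |q * u - q * v| := by rw [← mul_sub, abs_mul, abs_of_pos hqpos]
        _ ≤ |q * u - m| + |(m : ℝ) - q * v| := abs_sub_le _ _ _
        _ ≤ 2 * η := by rw [abs_sub_comm (m : ℝ)]; linarith
        _ < δ := hη.trans_le (min_le_left _ _)
    exact (hgap hne).not_gt this

theorem sum_mul_const_sub_sum_mul_update {ι α : Type*} [Fintype ι] [DecidableEq ι]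
    (c : ι → ℝ) (x : α → ℝ) (i i' : α) (j₀ : ι) :
    ∑ j, c j * x i - ∑ j, c j * x (update (fun _ => i) j₀ i' j) = c j₀ * (x i - x i') := by
  rw [← sum_sub_distrib, sum_eq_single j₀]
  · simp [mul_sub]
  · intro j _ hj
    simp [hj]
  · simp

theorem injective_of_comp_eq_imp_sum_mul_eq {ι α β : Type*} [Fintype ι] {φ : ι → ℤ}
    (hφ : φ ≠ 0) {a : α → ℝ} (ha : Injective a) {b : α → β}
    (hab : ∀ σ τ : ι → α, b ∘ σ = b ∘ τ →
      ∑ j, (φ j : ℝ) * a (σ j) = ∑ j, (φ j : ℝ) * a (τ j)) :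
    Injective b := by
  classical
  intro i i' hbi
  obtain ⟨j₀, hj₀⟩ := Function.ne_iff.mp hφ
  have hcomp : b ∘ (fun _ => i) = b ∘ update (fun _ => i) j₀ i' := by
    funext j
    by_cases hj : j = j₀ <;> simp [hj, hbi]
  have hsum := sub_eq_zero.mpr (hab _ _ hcomp)
  rw [sum_mul_const_sub_sum_mul_update] at hsum
  exact ha (sub_eq_zero.mp ((mul_eq_zero.mp hsum).resolve_left (by exact_mod_cast hj₀)))

open Finset in
theorem stmt_11_general (h k : ℕ)
    (a : Fin k → ℝ) (ha : Function.Injective a)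
    (φ : Fin h → ℤ) (hφ : φ ≠ 0)
    (φstar : ℤ) (hφstar : ∀ j, |φ j| ≤ φstar)
    (δstar : ℝ)
    (hδ : ∀ σ τ : Fin h → Fin k,
      (∑ j, (φ j : ℝ) * a (σ j)) ≠ (∑ j, (φ j : ℝ) * a (τ j)) →
      δstar ≤ |(∑ j, (φ j : ℝ) * a (σ j)) - ∑ j, (φ j : ℝ) * a (τ j)|)
    (ε : ℝ) (hεlt : ε < min δstar 1 / (2 * h * (φstar : ℝ)))
    (q : ℕ) (hq : 0 < q) (b : Fin k → ℤ)
    (hb : ∀ i, |q * a i - (b i : ℝ)| < ε) :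
    Function.Injective b ∧
    ∀ σ τ : Fin h → Fin k,
      ((∑ j, (φ j : ℝ) * a (σ j)) = ∑ j, (φ j : ℝ) * a (τ j)) ↔
        ((∑ j, φ j * b (σ j)) = ∑ j, φ j * b (τ j)) := by
  obtain ⟨j₀, hj₀⟩ := Function.ne_iff.mp hφ
  have hφstarR : ∀ j, |(φ j : ℝ)| ≤ φstar := fun j => by exact_mod_cast hφstar j
  have one_le_φstar : (1 : ℝ) ≤ φstar := by
    exact_mod_cast (Int.one_le_abs hj₀).trans (hφstar j₀)
  have hh : (1 : ℝ) ≤ h := by exact_mod_cast j₀.pos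
  have hη : 2 * (h * (φstar * ε)) < min δstar 1 := by
    rw [lt_div_iff₀ (by positivity)] at hεlt
    linarith
  have happrox : ∀ σ : Fin h → Fin k,
      |q * ∑ j, (φ j : ℝ) * a (σ j) - ((∑ j, φ j * b (σ j) : ℤ) : ℝ)|
        ≤ h * (φstar * ε) := by
    intro σ
    have := abs_sum_mul_sub_sum_mul_le (x := fun j => q * a (σ j)) (y := fun j => (b (σ j) : ℝ))
      hφstarR (fun j => (hb (σ j)).le)
    simpa [mul_sum, mul_left_comm] using this
  have hiso : ∀ σ τ : Fin h → Fin k,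
      ((∑ j, (φ j : ℝ) * a (σ j)) = ∑ j, (φ j : ℝ) * a (τ j)) ↔
        ((∑ j, φ j * b (σ j)) = ∑ j, φ j * b (τ j)) := fun σ τ =>
    eq_iff_intCast_eq_of_abs_mul_sub_le (by exact_mod_cast hq) (happrox σ) (happrox τ) hη
      (hδ σ τ)
  refine ⟨injective_of_comp_eq_imp_sum_mul_eq hφ ha fun σ τ hστ => (hiso σ τ).2 ?_, hiso⟩
  exact congrArg (fun g : Fin h → ℤ => ∑ j, φ j * g j) hστ

open Finset in
/-- Diophantine approximation step: if `|q aᵢ - bᵢ| < ε` with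
`ε < min(δ*,1)/(2hφ*)`, then `aᵢ ↦ bᵢ` is a `Φ`-isomorphism. -/
theorem stmt_11 (h k : ℕ) (hk : 2 ≤ k)
    (a : Fin k → ℝ) (ha : Function.Injective a)
    (φ : Fin h → ℤ) (hφ : φ ≠ 0)
    (φstar : ℤ) (hφstar : ∀ j, |φ j| ≤ φstar)
    (δstar : ℝ) (hδpos : 0 < δstar)
    (hδ : ∀ σ τ : Fin h → Fin k,
      (∑ j, (φ j : ℝ) * a (σ j)) ≠ (∑ j, (φ j : ℝ) * a (τ j)) →
      δstar ≤ |(∑ j, (φ j : ℝ) * a (σ j)) - ∑ j, (φ j : ℝ) * a (τ j)|)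
    (ε : ℝ) (hε : 0 < ε) (hεlt : ε < min δstar 1 / (2 * h * (φstar : ℝ)))
    (q : ℕ) (hq : 0 < q) (b : Fin k → ℤ)
    (hb : ∀ i, |q * a i - (b i : ℝ)| < ε) :
    Function.Injective b ∧
    ∀ σ τ : Fin h → Fin k,
      ((∑ j, (φ j : ℝ) * a (σ j)) = ∑ j, (φ j : ℝ) * a (τ j)) ↔
        ((∑ j, φ j * b (σ j)) = ∑ j, φ j * b (τ j)) :=
  stmt_11_general h k a ha φ hφ φstar hφstar δstar hδ ε hεlt q hq b hb
end

section
/- Let A* = {0, 2, 3, 4, 7, 11, 12, 14} ⊆ ℤ, let G be a 2-divisible abelian group, and let f : A* → G be a Freiman isomorphism onto its image. Then f(x) = x·((f(2) - f(0))/2) + f(0) for all x ∈ A*; that is, f is affine. -/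
/-!
Put `d = f 3 - f 2`. The relations `0 + 4 = 2 + 2` and `3 + 3 = 2 + 4` give `f 2 = 2 • d + f 0`,
so `f` agrees with `x ↦ x • d + f 0` at `0, 2, 3`. An additive relation `a + b = a' + b'` with `f`
affine at three of its terms forces `f` to be affine at the fourth, and this propagates the formula
along `4, 7, 11, 14, 12`. In particular `d` is itself a half of `f 2 - f 0`.
-/

def aStar : Finset ℤ := {0, 2, 3, 4, 7, 11, 12, 14}

section

variable {G : Type*} [AddCommGroup G] {f : ℤ → G}

theorem apply_eq_zsmul_add_of_add_eq {d c : G} {a b a' b' : ℤ} (hab : a + b = a' + b')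
    (hf : f a + f b = f a' + f b') (ha : f a = a • d + c) (ha' : f a' = a' • d + c)
    (hb' : f b' = b' • d + c) : f b = b • d + c := by
  obtain rfl : b = a' + b' - a := by omega
  rw [sub_zsmul, add_zsmul]
  linear_combination (norm := module) hf - ha + ha' + hb'

theorem apply_eq_zsmul_add_of_freiman_hom
    (hf : ∀ a₁ ∈ aStar, ∀ a₂ ∈ aStar, ∀ a₃ ∈ aStar, ∀ a₄ ∈ aStar,
      a₁ + a₂ = a₃ + a₄ → f a₁ + f a₂ = f a₃ + f a₄) :
    ∀ x ∈ aStar, f x = x • (f 3 - f 2) + f 0 := by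
  have rel (a₁ a₂ a₃ a₄ : ℤ) (h : a₁ + a₂ = a₃ + a₄ := by norm_num)
      (h₁ : a₁ ∈ aStar := by decide) (h₂ : a₂ ∈ aStar := by decide)
      (h₃ : a₃ ∈ aStar := by decide) (h₄ : a₄ ∈ aStar := by decide) :
      f a₁ + f a₂ = f a₃ + f a₄ :=
    hf a₁ h₁ a₂ h₂ a₃ h₃ a₄ h₄ h
  set d := f 3 - f 2 with hd
  have f0 : f 0 = (0 : ℤ) • d + f 0 := by simp
  have f2 : f 2 = (2 : ℤ) • d + f 0 := by
    linear_combination (norm := module) - rel 3 3 2 4 - rel 0 4 2 2 - 2 • hd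
  have f3 : f 3 = (3 : ℤ) • d + f 0 := by linear_combination (norm := module) f2 - hd
  have f4 := apply_eq_zsmul_add_of_add_eq (by norm_num) (rel 0 4 2 2) f0 f2 f2
  have f7 := apply_eq_zsmul_add_of_add_eq (by norm_num) (rel 0 7 3 4) f0 f3 f4
  have f11 := apply_eq_zsmul_add_of_add_eq (by norm_num) (rel 3 11 7 7) f3 f7 f7
  have f14 := apply_eq_zsmul_add_of_add_eq (by norm_num) (rel 0 14 3 11) f0 f3 f11
  have f12 := apply_eq_zsmul_add_of_add_eq (by norm_num) (rel 4 12 2 14) f4 f2 f14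
  intro x hx
  simp only [aStar, Finset.mem_insert, Finset.mem_singleton] at hx
  rcases hx with rfl | rfl | rfl | rfl | rfl | rfl | rfl | rfl <;> assumption

end

theorem stmt_14_general {G : Type*} [AddCommGroup G]
    (f : ℤ → G)
    (hFreiman : ∀ a₁ ∈ ({0, 2, 3, 4, 7, 11, 12, 14} : Finset ℤ),
      ∀ a₂ ∈ ({0, 2, 3, 4, 7, 11, 12, 14} : Finset ℤ),
      ∀ a₃ ∈ ({0, 2, 3, 4, 7, 11, 12, 14} : Finset ℤ),
      ∀ a₄ ∈ ({0, 2, 3, 4, 7, 11, 12, 14} : Finset ℤ),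
      (a₁ + a₂ = a₃ + a₄ ↔ f a₁ + f a₂ = f a₃ + f a₄)) :
    ∃ g : G, g + g = f 2 - f 0 ∧
      ∀ x ∈ ({0, 2, 3, 4, 7, 11, 12, 14} : Finset ℤ), f x = x • g + f 0 := by
  have affine := apply_eq_zsmul_add_of_freiman_hom
    fun a₁ h₁ a₂ h₂ a₃ h₃ a₄ h₄ ↦ (hFreiman a₁ h₁ a₂ h₂ a₃ h₃ a₄ h₄).1
  refine ⟨f 3 - f 2, ?_, affine⟩
  have f2 := affine 2 (by decide)
  linear_combination (norm := module) -f2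

/-- Theorem 7: a Freiman isomorphism from `A* = {0,2,3,4,7,11,12,14}` into a
2-divisible abelian group is the affine map `x ↦ x·((f 2 - f 0)/2) + f 0`. -/
theorem stmt_14 {G : Type*} [AddCommGroup G]
    (hdiv : ∀ a : G, ∃ x : G, x + x = a)
    (f : ℤ → G)
    (hinj : Set.InjOn f (({0, 2, 3, 4, 7, 11, 12, 14} : Finset ℤ) : Set ℤ))
    (hFreiman : ∀ a₁ ∈ ({0, 2, 3, 4, 7, 11, 12, 14} : Finset ℤ),
      ∀ a₂ ∈ ({0, 2, 3, 4, 7, 11, 12, 14} : Finset ℤ),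
      ∀ a₃ ∈ ({0, 2, 3, 4, 7, 11, 12, 14} : Finset ℤ),
      ∀ a₄ ∈ ({0, 2, 3, 4, 7, 11, 12, 14} : Finset ℤ),
      (a₁ + a₂ = a₃ + a₄ ↔ f a₁ + f a₂ = f a₃ + f a₄)) :
    ∃ g : G, g + g = f 2 - f 0 ∧
      ∀ x ∈ ({0, 2, 3, 4, 7, 11, 12, 14} : Finset ℤ), f x = x • g + f 0 :=
  stmt_14_general f hFreiman
end
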